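/- For every real ν with 0 ≤ ν < 1/3 there exist bandwidths b : Fin 5 → ℝ with 0 < b i ≤ 1 − ν for all i, and an assignment r₀ : Fin 4 → Fin 2 of the first four flows, such that: (a) r₀ is ν-feasible (each edge load is at most 1 − ν); (b) there exists a ν-feasible assignment of all five flows; (c) for every edge e, the extension of r₀ placing flow 4 on e is not ν-feasible; and (d) every assignment r' : Fin 4 → Fin 2 differing from r₀ at exactly one index has some edge whose load is strictly greater than 1. Hence reserving a scratch capacity of ν < 1/3 on every link does not prevent untimed single-flow reroutes from exceeding even the full link capacity. -/

import Mathlib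

open Finset

/-- The load on edge `e`: the sum of the bandwidths of the flows assigned to `e`. -/
noncomputable def load {ι : Type*} [Fintype ι] {m : ℕ} (b : ι → ℝ) (r : ι → Fin m)
    (e : Fin m) : ℝ :=
  ∑ i ∈ univ.filter (fun i => r i = e), b i

/-- An assignment is ν-feasible if the load of every edge is at most the usable
capacity `1 - ν` (a fraction `ν` of the unit capacity is reserved as scratch). -/
def NuFeasible {ι : Type*} [Fintype ι] {m : ℕ} (ν : ℝ) (b : ι → ℝ) (r : ι → Fin m) : Prop :=
  ∀ e, load b r e ≤ 1 - ν

/-!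
Two small flows of size `(3 - ν)/8` and two large ones of size `(1 - ν)/2` are routed one small
and one large per edge, so both edges carry `(7 - 5ν)/8`. Each of these four flows is larger than
the `(1 + 5ν)/8` of full capacity left on the other edge, so moving any single one of them
overloads it; the fifth flow `(1 - 3ν)/4` exceeds the `(1 - 3ν)/8` of usable capacity left on
either edge, yet fits exactly once the two small flows share an edge with it and the two large
flows share the other. Every inequality involved reduces to `ν < 1/3`.
-/

lemma load_eq_sum_ite {ι : Type*} [Fintype ι] {m : ℕ} (b : ι → ℝ) (r : ι → Fin m) (e : Fin m) :
    load b r e = ∑ i, if r i = e then b i else 0 :=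
  sum_filter _ _

lemma load_snoc_self {n m : ℕ} (b : Fin (n + 1) → ℝ) (r : Fin n → Fin m) (e : Fin m) :
    load b (Fin.snoc r e) e = load (fun i : Fin n => b i.castSucc) r e + b (Fin.last n) := by
  simp only [load_eq_sum_ite, Fin.sum_univ_castSucc, Fin.snoc_castSucc, Fin.snoc_last, if_true]

lemma load_update_of_ne {ι : Type*} [Fintype ι] [DecidableEq ι] {m : ℕ} (b : ι → ℝ)
    (r : ι → Fin m) {i : ι} {e : Fin m} (h : r i ≠ e) :
    load b (Function.update r i e) e = load b r e + b i := by
  simp only [load_eq_sum_ite, ← add_sum_erase _ _ (mem_univ i), Function.update_self, if_true,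
    if_neg h, zero_add]
  rw [add_comm]
  congr 1
  refine sum_congr rfl fun j hj => ?_
  rw [Function.update_of_ne (ne_of_mem_erase hj)]

lemma eq_update_of_ne_imp_eq {α β : Type*} [DecidableEq α] {f g : α → β} {i : α}
    (hi : ∀ j, g j ≠ f j → j = i) : g = Function.update f i (g i) :=
  Function.eq_update_iff.2 ⟨rfl, fun j hj => by_contra fun h => hj (hi j h)⟩

noncomputable def gadgetBandwidth (ν : ℝ) : Fin 5 → ℝ :=
  ![(3 - ν) / 8, (1 - ν) / 2, (3 - ν) / 8, (1 - ν) / 2, (1 - 3 * ν) / 4]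

def gadgetRouting : Fin 4 → Fin 2 := ![0, 0, 1, 1]

lemma load_gadgetRouting (ν : ℝ) (e : Fin 2) :
    load (fun i : Fin 4 => gadgetBandwidth ν i.castSucc) gadgetRouting e = (7 - 5 * ν) / 8 := by
  rw [load_eq_sum_ite, Fin.sum_univ_four]
  fin_cases e <;> simp [gadgetBandwidth, gadgetRouting] <;> ring

lemma gadgetBandwidth_pos_and_le {ν : ℝ} (hν : ν < 1 / 3) (i : Fin 5) :
    0 < gadgetBandwidth ν i ∧ gadgetBandwidth ν i ≤ 1 - ν := by
  fin_cases i <;> (simp [gadgetBandwidth]; exact ⟨by linarith, by linarith⟩)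

lemma gadgetBandwidth_castSucc_gt {ν : ℝ} (hν : ν < 1 / 3) (i : Fin 4) :
    1 - (7 - 5 * ν) / 8 < gadgetBandwidth ν i.castSucc := by
  fin_cases i <;> simp [gadgetBandwidth] <;> linarith

lemma nuFeasible_gadgetBandwidth (ν : ℝ) :
    NuFeasible ν (gadgetBandwidth ν) (![0, 1, 0, 1, 0] : Fin 5 → Fin 2) := by
  intro e
  rw [load_eq_sum_ite, Fin.sum_univ_five]
  fin_cases e
  · simp [gadgetBandwidth]
    linarith
  · simp [gadgetBandwidth]

theorem stmt8_general (ν : ℝ) (hν₁ : ν < 1/3) :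
    ∃ b : Fin 5 → ℝ, (∀ i, 0 < b i ∧ b i ≤ 1 - ν) ∧
    ∃ r₀ : Fin 4 → Fin 2,
      -- (a) `r₀` is ν-feasible
      NuFeasible ν (fun i : Fin 4 => b i.castSucc) r₀ ∧
      -- (b) all five flows admit a ν-feasible assignment
      (∃ r : Fin 5 → Fin 2, NuFeasible ν b r) ∧
      -- (c) placing flow 4 on either edge, without rerouting, is not ν-feasible
      (∀ e : Fin 2, ¬ NuFeasible ν b (Fin.snoc r₀ e)) ∧
      -- (d) any single-flow reroute loads some edge beyond the full capacity 1
      (∀ r' : Fin 4 → Fin 2, (∃! i, r' i ≠ r₀ i) →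
        ∃ e : Fin 2, 1 < load (fun i : Fin 4 => b i.castSucc) r' e) := by
  refine ⟨gadgetBandwidth ν, gadgetBandwidth_pos_and_le hν₁, gadgetRouting, fun e => ?_,
    ⟨_, nuFeasible_gadgetBandwidth ν⟩, fun e hfeas => ?_, ?_⟩
  · rw [load_gadgetRouting]
    linarith
  · have hload := hfeas e
    rw [load_snoc_self, load_gadgetRouting] at hload
    have hlast : (1 - 3 * ν) / 4 = gadgetBandwidth ν (Fin.last 4) := rfl
    linarith
  · rintro r' ⟨i, hi, huniq⟩
    obtain ⟨e, rfl⟩ : ∃ e, r' = Function.update gadgetRouting i e :=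
      ⟨_, eq_update_of_ne_imp_eq huniq⟩
    rw [Function.update_self] at hi
    refine ⟨e, ?_⟩
    rw [load_update_of_ne _ _ (Ne.symm hi), load_gadgetRouting]
    linarith [gadgetBandwidth_castSucc_gt hν₁ i]

theorem stmt8 (ν : ℝ) (hν₀ : 0 ≤ ν) (hν₁ : ν < 1/3) :
    ∃ b : Fin 5 → ℝ, (∀ i, 0 < b i ∧ b i ≤ 1 - ν) ∧
    ∃ r₀ : Fin 4 → Fin 2,
      -- (a) `r₀` is ν-feasible
      NuFeasible ν (fun i : Fin 4 => b i.castSucc) r₀ ∧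
      -- (b) all five flows admit a ν-feasible assignment
      (∃ r : Fin 5 → Fin 2, NuFeasible ν b r) ∧
      -- (c) placing flow 4 on either edge, without rerouting, is not ν-feasible
      (∀ e : Fin 2, ¬ NuFeasible ν b (Fin.snoc r₀ e)) ∧
      -- (d) any single-flow reroute loads some edge beyond the full capacity 1
      (∀ r' : Fin 4 → Fin 2, (∃! i, r' i ≠ r₀ i) →
        ∃ e : Fin 2, 1 < load (fun i : Fin 4 => b i.castSucc) r' e) :=
  stmt8_general ν hν₁
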